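/- arXiv:2501.06473 — 4 statements merged into one kernel-verified Lean document; each statement's English description precedes it below -/
import Mathlib

section
/- Let A, Ψ₁, Ψ₂ be N×N complex matrices with Ψ₁ = (I - B·D + ρ·A)·A⁻¹ and Ψ₂ = ρ·A⁻¹ for invertible A and scalar ρ. Suppose a sequence of invertible matrices (X_j) satisfies X_{j+1} = A·(I - B·D + ρ·A - ρ·X_j)⁻¹ whenever the inverse exists. If (K_j) is a sequence of invertible matrices with K₀ = I, K₁ = X₁⁻¹, and X_j = K_j⁻¹·K_{j-1} for all j ≥ 1, then the transposes satisfy the second-order linear matrix recurrence K_{j+1}ᵀ - Ψ₁ᵀ·K_jᵀ + Ψ₂ᵀ·K_{j-1}ᵀ = 0 for all j ≥ 1. -/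
open Matrix

/-- If invertible `K j` satisfy `K 0 = 1`, `K 1 = (X 1)⁻¹`, and
`X j = (K j)⁻¹ * K (j-1)` for `j ≥ 1`, where the invertible `X j` satisfy
`X (j+1) = A * (1 - B*D + ρ•A - ρ•X j)⁻¹`, then the transposes satisfy the
second-order linear recurrence `K_{j+1}ᵀ - Ψ₁ᵀ K_jᵀ + Ψ₂ᵀ K_{j-1}ᵀ = 0`. -/
theorem stmt0 {N : ℕ} (A : Matrix (Fin N) (Fin N) ℂ)
    (B : Matrix (Fin N) (Fin 1) ℂ) (D : Matrix (Fin 1) (Fin N) ℂ)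
    (ρ : ℂ) (Ψ₁ Ψ₂ : Matrix (Fin N) (Fin N) ℂ)
    (hA : IsUnit A)
    (hΨ₁ : Ψ₁ = (1 - B * D + ρ • A) * A⁻¹)
    (hΨ₂ : Ψ₂ = ρ • A⁻¹)
    (X K : ℕ → Matrix (Fin N) (Fin N) ℂ)
    (hXunit : ∀ j, 1 ≤ j → IsUnit (X j))
    (hinv : ∀ j, IsUnit (1 - B * D + ρ • A - ρ • X j))
    (hXrec : ∀ j, X (j + 1) = A * (1 - B * D + ρ • A - ρ • X j)⁻¹)
    (hKunit : ∀ j, IsUnit (K j))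
    (hK0 : K 0 = 1)
    (hK1 : K 1 = (X 1)⁻¹)
    (hKX : ∀ j, X (j + 1) = (K (j + 1))⁻¹ * K j) :
    ∀ j, (K (j + 2))ᵀ - Ψ₁ᵀ * (K (j + 1))ᵀ + Ψ₂ᵀ * (K j)ᵀ = 0 := by
  intro j
  set M : Matrix (Fin N) (Fin N) ℂ := 1 - B * D + ρ • A - ρ • X (j + 1) with hMdef
  have hM : IsUnit M := hinv (j + 1)
  have hMA : X (j + 2) * M = A := by
    rw [show X (j + 2) = A * M⁻¹ from hXrec (j + 1), mul_assoc,
      Matrix.nonsing_inv_mul M ((Matrix.isUnit_iff_isUnit_det M).mp hM), mul_one]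
  have hAinv : A * A⁻¹ = 1 :=
    Matrix.mul_nonsing_inv A ((Matrix.isUnit_iff_isUnit_det A).mp hA)
  have h1 : X (j + 2) * Ψ₁ - X (j + 2) * X (j + 1) * Ψ₂ = 1 := by
    have expand : X (j + 2) * (1 - B * D + ρ • A) - ρ • (X (j + 2) * X (j + 1)) = A := by
      have hsplit : X (j + 2) * M
          = X (j + 2) * (1 - B * D + ρ • A) - ρ • (X (j + 2) * X (j + 1)) := by
        rw [hMdef, mul_sub, Matrix.mul_smul]
      rw [← hsplit, hMA]
    calc X (j + 2) * Ψ₁ - X (j + 2) * X (j + 1) * Ψ₂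
        = (X (j + 2) * (1 - B * D + ρ • A) - ρ • (X (j + 2) * X (j + 1))) * A⁻¹ := by
          rw [hΨ₁, hΨ₂]
          simp [sub_mul, mul_assoc, Matrix.mul_smul, Matrix.smul_mul]
      _ = 1 := by rw [expand, hAinv]
  have hKinv : ∀ i, K i * (K i)⁻¹ = 1 := fun i =>
    Matrix.mul_nonsing_inv (K i) ((Matrix.isUnit_iff_isUnit_det (K i)).mp (hKunit i))
  have e1 : X (j + 2) = (K (j + 2))⁻¹ * K (j + 1) := hKX (j + 1)
  have hXX : X (j + 2) * X (j + 1) = (K (j + 2))⁻¹ * K j := by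
    rw [e1, hKX j, mul_assoc, ← mul_assoc (K (j + 1)), hKinv, one_mul]
  have key : K (j + 2) = K (j + 1) * Ψ₁ - K j * Ψ₂ := by
    have h2 : (K (j + 2))⁻¹ * (K (j + 1) * Ψ₁ - K j * Ψ₂) = 1 := by
      rw [mul_sub, ← mul_assoc, ← mul_assoc, ← e1, ← hXX, h1]
    calc K (j + 2) = K (j + 2) * ((K (j + 2))⁻¹ * (K (j + 1) * Ψ₁ - K j * Ψ₂)) := by
          rw [h2, mul_one]
      _ = K (j + 1) * Ψ₁ - K j * Ψ₂ := by rw [← mul_assoc, hKinv, one_mul]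
  rw [key, Matrix.transpose_sub, Matrix.transpose_mul, Matrix.transpose_mul]
  abel
end

section
/- Let Q(S) = S² - Ψ₁ᵀS + Ψ₂ᵀ be a monic quadratic matrix polynomial in N×N matrices, and suppose S₁ and S₂ are two solutions of Q(S) = 0 such that every eigenvalue of S₁ has strictly larger absolute value than every eigenvalue of S₂ (S₁ dominant, S₂ minimal). Then the block Vandermonde matrix V = [[I, I],[S₁, S₂]] (a 2N×2N matrix) is nonsingular, and in particular S₂ - S₁ is invertible. -/
/-!
If `S₁ v = S₂ v` for some `v ≠ 0`, the subspace `ker (S₁ - S₂)` is invariant under `S₁`, because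
two solutions of `X² - A X + B = 0` satisfy `S₁² x = A S₁ x - B x = A S₂ x - B x = S₂² x = S₂ S₁ x`
on it. An eigenvector of `S₁` inside this subspace is then an eigenvector of `S₂` with the same
eigenvalue, which the separation of the spectra rules out. Hence `S₂ - S₁` is invertible, and so is
the block Vandermonde matrix, whose Schur complement is `S₂ - S₁`.
-/

open Matrix

namespace Module.End

variable {K V : Type*} [Field K] [AddCommGroup V] [Module K V]

theorem mapsTo_ker_sub_of_mul_self_sub_eq {f g a : End K V}
    (h : f * f - a * f = g * g - a * g) :
    Set.MapsTo f (LinearMap.ker (f - g)) (LinearMap.ker (f - g)) := by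
  intro x hx
  have hfx : f x = g x := sub_eq_zero.mp hx
  have hsq : f (f x) = g (g x) := by
    have := congrArg (· x) h
    simpa only [LinearMap.sub_apply, Module.End.mul_apply, hfx, sub_left_inj] using this
  change f (f x) - g (f x) = 0
  rw [hsq, hfx, sub_self]

theorem exists_hasEigenvector_common_of_mul_self_sub_eq [IsAlgClosed K] [FiniteDimensional K V]
    {f g a : End K V} (h : f * f - a * f = g * g - a * g) (hker : LinearMap.ker (f - g) ≠ ⊥) :
    ∃ μ v, f.HasEigenvector μ v ∧ g.HasEigenvector μ v := by
  have : Nontrivial (LinearMap.ker (f - g)) := Submodule.nontrivial_iff_ne_bot.mpr hker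
  obtain ⟨μ, hμ⟩ := exists_eigenvalue (f.restrict (mapsTo_ker_sub_of_mul_self_sub_eq h))
  obtain ⟨⟨w, hwK⟩, hw⟩ := hμ.exists_hasEigenvector
  have hw0 : w ≠ 0 := fun h0 => hw.2 (Subtype.ext h0)
  have hfw : f w = μ • w := congrArg Subtype.val hw.apply_eq_smul
  have hgw : g w = μ • w := by rw [← hfw, eq_comm, ← sub_eq_zero]; exact hwK
  exact ⟨μ, w, ⟨mem_eigenspace_iff.mpr hfw, hw0⟩, ⟨mem_eigenspace_iff.mpr hgw, hw0⟩⟩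

theorem isUnit_sub_of_mul_self_sub_eq [IsAlgClosed K] [FiniteDimensional K V] {f g a : End K V}
    (h : f * f - a * f = g * g - a * g) (hdisj : Disjoint (spectrum K f) (spectrum K g)) :
    IsUnit (f - g) := by
  rw [LinearMap.isUnit_iff_ker_eq_bot]
  by_contra hker
  obtain ⟨μ, v, hf, hg⟩ := exists_hasEigenvector_common_of_mul_self_sub_eq h hker
  exact Set.disjoint_left.mp hdisj
    (hasEigenvalue_iff_mem_spectrum.mp (hasEigenvalue_of_hasEigenvector hf))
    (hasEigenvalue_iff_mem_spectrum.mp (hasEigenvalue_of_hasEigenvector hg))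

end Module.End

namespace Matrix

variable {n K : Type*} [Fintype n] [DecidableEq n] [Field K] [IsAlgClosed K]

theorem isUnit_sub_of_mul_self_sub_eq {S₁ S₂ A : Matrix n n K}
    (h : S₁ * S₁ - A * S₁ = S₂ * S₂ - A * S₂) (hdisj : Disjoint (spectrum K S₁) (spectrum K S₂)) :
    IsUnit (S₁ - S₂) := by
  let e := toLinAlgEquiv' (R := K) (n := n)
  rw [← isUnit_map_iff e, map_sub]
  refine Module.End.isUnit_sub_of_mul_self_sub_eq (a := e A) ?_ ?_
  · simpa only [map_sub, map_mul] using congrArg e h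
  · rwa [AlgEquiv.spectrum_eq, AlgEquiv.spectrum_eq]

end Matrix

/-- If `S₁` and `S₂` solve the monic quadratic matrix polynomial
`S² - Ψ₁ᵀ S + Ψ₂ᵀ = 0` and every eigenvalue of `S₁` has strictly larger modulus
than every eigenvalue of `S₂`, then the block Vandermonde matrix
`[[I, I], [S₁, S₂]]` is nonsingular; in particular `S₂ - S₁` is invertible. -/
theorem stmt1 {N : ℕ} (Ψ₁ Ψ₂ S₁ S₂ : Matrix (Fin N) (Fin N) ℂ)
    (hS₁ : S₁ ^ 2 - Ψ₁ᵀ * S₁ + Ψ₂ᵀ = 0)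
    (hS₂ : S₂ ^ 2 - Ψ₁ᵀ * S₂ + Ψ₂ᵀ = 0)
    (hdom : ∀ μ ∈ spectrum ℂ S₂, ∀ lam ∈ spectrum ℂ S₁, ‖μ‖ < ‖lam‖) :
    IsUnit (Matrix.fromBlocks (1 : Matrix (Fin N) (Fin N) ℂ) 1 S₁ S₂) ∧ IsUnit (S₂ - S₁) := by
  have hsolves : S₂ * S₂ - Ψ₁ᵀ * S₂ = S₁ * S₁ - Ψ₁ᵀ * S₁ := by
    rw [← pow_two, ← pow_two, eq_neg_of_add_eq_zero_left hS₁, eq_neg_of_add_eq_zero_left hS₂]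
  have hdisj : Disjoint (spectrum ℂ S₂) (spectrum ℂ S₁) :=
    Set.disjoint_left.mpr fun μ h₂ h₁ => lt_irrefl _ (hdom μ h₂ μ h₁)
  have hunit : IsUnit (S₂ - S₁) := isUnit_sub_of_mul_self_sub_eq hsolves hdisj
  refine ⟨?_, hunit⟩
  rwa [isUnit_iff_isUnit_det, det_fromBlocks_one₁₁, Matrix.mul_one, ← isUnit_iff_isUnit_det]
end

section
/- Let S₁ and S₂ be N×N matrices such that S₁ is invertible and, for some submultiplicative matrix norm, ‖S₂ʲ‖·‖S₁⁻ʲ‖ → 0 as j → ∞. Let C₁ be invertible and C₂ arbitrary, and define K_jᵀ = S₁ʲC₁ + S₂ʲC₂. Then for all sufficiently large j, K_jᵀ is invertible, and the sequence X_j := K_j⁻¹K_{j-1} converges to (S₁ᵀ)⁻¹ as j → ∞. -/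
open Matrix Filter

-- Equip matrices with the (submultiplicative) `L∞` operator norm.
attribute [local instance] Matrix.linftyOpNormedAddCommGroup Matrix.linftyOpNormedRing

/-- if `S₁` is invertible, `‖S₂ʲ‖·‖S₁⁻ʲ‖ → 0` for a submultiplicative
matrix norm, `C₁` is invertible and `K_jᵀ = S₁ʲ C₁ + S₂ʲ C₂`, then `K_jᵀ` is
invertible for all sufficiently large `j`, and `X_j = K_j⁻¹ K_{j-1}` converges
to `(S₁ᵀ)⁻¹`. -/
theorem stmt3 {N : ℕ} (S₁ S₂ C₁ C₂ : Matrix (Fin N) (Fin N) ℂ)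
    (hS₁ : IsUnit S₁) (hC₁ : IsUnit C₁)
    (hnorm : Tendsto (fun j : ℕ => ‖S₂ ^ j‖ * ‖(S₁⁻¹) ^ j‖) atTop (nhds 0))
    (Kt K : ℕ → Matrix (Fin N) (Fin N) ℂ)
    (hKt : ∀ j, Kt j = S₁ ^ j * C₁ + S₂ ^ j * C₂)
    (hK : ∀ j, K j = (Kt j)ᵀ) :
    (∃ J : ℕ, ∀ j, J ≤ j → IsUnit (K j)) ∧
      Tendsto (fun j : ℕ => (K (j + 1))⁻¹ * K j) atTop (nhds (S₁ᵀ)⁻¹) := by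
  have hdS : IsUnit S₁.det := (Matrix.isUnit_iff_isUnit_det S₁).mp hS₁
  have hdC : IsUnit C₁.det := (Matrix.isUnit_iff_isUnit_det C₁).mp hC₁
  have hS₁i : S₁ * S₁⁻¹ = 1 := Matrix.mul_nonsing_inv _ hdS
  have hS₁i' : S₁⁻¹ * S₁ = 1 := Matrix.nonsing_inv_mul _ hdS
  have hCi : C₁ * C₁⁻¹ = 1 := Matrix.mul_nonsing_inv _ hdC
  have hcm : Commute S₁ S₁⁻¹ := by
    show S₁ * S₁⁻¹ = S₁⁻¹ * S₁
    rw [hS₁i, hS₁i']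
  have hpow : ∀ j : ℕ, S₁ ^ j * (S₁⁻¹) ^ j = 1 := fun j => by
    rw [← hcm.mul_pow, hS₁i, one_pow]
  have hpow' : ∀ j : ℕ, (S₁⁻¹) ^ j * S₁ ^ j = 1 := fun j => by
    rw [← hcm.symm.mul_pow, hS₁i', one_pow]
  have hCc : ∀ X : Matrix (Fin N) (Fin N) ℂ, C₁ * (C₁⁻¹ * X) = X := fun X => by
    rw [← mul_assoc, hCi, one_mul]
  have hSc : ∀ (j : ℕ) (X : Matrix (Fin N) (Fin N) ℂ),
      S₁ ^ j * ((S₁⁻¹) ^ j * X) = X := fun j X => by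
    rw [← mul_assoc, hpow j, one_mul]
  -- norm product helpers
  have nm3 : ∀ a b c : Matrix (Fin N) (Fin N) ℂ, ‖a * (b * c)‖ ≤ ‖a‖ * (‖b‖ * ‖c‖) :=
    fun a b c => (norm_mul_le _ _).trans
      (mul_le_mul_of_nonneg_left (norm_mul_le _ _) (norm_nonneg _))
  have nm4 : ∀ a b c d : Matrix (Fin N) (Fin N) ℂ,
      ‖a * (b * (c * d))‖ ≤ ‖a‖ * (‖b‖ * (‖c‖ * ‖d‖)) :=
    fun a b c d => (norm_mul_le _ _).trans
      (mul_le_mul_of_nonneg_left (nm3 b c d) (norm_nonneg _))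
  -- the perturbation matrix A
  set A : ℕ → Matrix (Fin N) (Fin N) ℂ :=
    fun j => 1 + C₁⁻¹ * ((S₁⁻¹) ^ j * (S₂ ^ j * C₂)) with hAdef
  have hKtA : ∀ j, Kt j = S₁ ^ j * C₁ * A j := by
    intro j
    rw [hKt j, hAdef]
    simp only
    rw [mul_add, mul_one]
    congr 1
    rw [mul_assoc (S₁ ^ j) C₁, hCc, ← mul_assoc, hpow j, one_mul]
  -- A j → 1
  have hA1 : Tendsto A atTop (nhds 1) := by
    refine tendsto_iff_norm_sub_tendsto_zero.mpr ?_
    apply squeeze_zero (fun j => norm_nonneg _)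
      (g := fun j => ‖S₂ ^ j‖ * ‖(S₁⁻¹) ^ j‖ * (‖C₁⁻¹‖ * ‖C₂‖))
    · intro j
      have : A j - 1 = C₁⁻¹ * ((S₁⁻¹) ^ j * (S₂ ^ j * C₂)) := by
        rw [hAdef]; simp
      rw [this]
      calc ‖C₁⁻¹ * ((S₁⁻¹) ^ j * (S₂ ^ j * C₂))‖
          ≤ ‖C₁⁻¹‖ * (‖(S₁⁻¹) ^ j‖ * (‖S₂ ^ j‖ * ‖C₂‖)) := nm4 _ _ _ _
        _ = ‖S₂ ^ j‖ * ‖(S₁⁻¹) ^ j‖ * (‖C₁⁻¹‖ * ‖C₂‖) := by ring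
    · simpa using hnorm.mul_const (‖C₁⁻¹‖ * ‖C₂‖)
  have hA1' : Tendsto (fun j => A (j + 1)) atTop (nhds 1) :=
    hA1.comp (tendsto_add_atTop_nat 1)
  -- eventually A j is a unit
  have hGeom : HasSummableGeomSeries (Matrix (Fin N) (Fin N) ℂ) := by
    letI : NormedSpace ℂ (Matrix (Fin N) (Fin N) ℂ) := Matrix.linftyOpNormedSpace
    have : @CompleteSpace (Matrix (Fin N) (Fin N) ℂ) PseudoMetricSpace.toUniformSpace :=
      FiniteDimensional.complete ℂ _
    infer_instance
  have hevA : ∀ᶠ j in atTop, IsUnit (A j) :=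
    hA1.eventually (Units.isOpen.mem_nhds (by simp))
  have hevA' : ∀ᶠ j in atTop, IsUnit (A (j + 1)) :=
    hA1'.eventually (Units.isOpen.mem_nhds (by simp))
  -- part 1
  have hpart1 : ∃ J : ℕ, ∀ j, J ≤ j → IsUnit (K j) := by
    have h : ∀ᶠ j in atTop, IsUnit (K j) := hevA.mono fun j hj => by
      have hu : IsUnit (Kt j) := by
        rw [hKtA j]; exact ((hS₁.pow j).mul hC₁).mul hj
      rw [hK j, Matrix.isUnit_iff_isUnit_det, Matrix.det_transpose]
      exact (Matrix.isUnit_iff_isUnit_det _).mp hu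
    exact eventually_atTop.mp h
  refine ⟨hpart1, ?_⟩
  -- inverse of A tends to 1
  have hAinv : Tendsto (fun j => (A (j + 1))⁻¹) atTop (nhds 1) := by
    have h := ((NormedRing.inverse_continuousAt (1 : (Matrix (Fin N) (Fin N) ℂ)ˣ)).tendsto).comp
      (by rw [Units.val_one]; exact hA1')
    simp only [Function.comp_def, Units.val_one, Ring.inverse_one] at h
    simp only [Matrix.nonsing_inv_eq_ringInverse]; exact h
  -- the remainder R
  set R : ℕ → Matrix (Fin N) (Fin N) ℂ := fun j =>
    (S₂ ^ j * C₂ - S₁⁻¹ * (S₂ ^ (j + 1) * C₂)) *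
      ((A (j + 1))⁻¹ * (C₁⁻¹ * (S₁⁻¹) ^ (j + 1))) with hRdef
  -- R → 0
  have hRt : Tendsto R atTop (nhds 0) := by
    apply squeeze_zero_norm
      (a := fun j => (‖S₂ ^ j * C₂ - S₁⁻¹ * (S₂ ^ (j + 1) * C₂)‖ * ‖(S₁⁻¹) ^ (j + 1)‖) *
        (‖(A (j + 1))⁻¹‖ * ‖C₁⁻¹‖))
    · intro j
      rw [hRdef]
      calc ‖(S₂ ^ j * C₂ - S₁⁻¹ * (S₂ ^ (j + 1) * C₂)) *
            ((A (j + 1))⁻¹ * (C₁⁻¹ * (S₁⁻¹) ^ (j + 1)))‖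
          ≤ ‖S₂ ^ j * C₂ - S₁⁻¹ * (S₂ ^ (j + 1) * C₂)‖ *
            (‖(A (j + 1))⁻¹‖ * (‖C₁⁻¹‖ * ‖(S₁⁻¹) ^ (j + 1)‖)) := nm4 _ _ _ _
        _ = (‖S₂ ^ j * C₂ - S₁⁻¹ * (S₂ ^ (j + 1) * C₂)‖ * ‖(S₁⁻¹) ^ (j + 1)‖) *
            (‖(A (j + 1))⁻¹‖ * ‖C₁⁻¹‖) := by ring
    · have ha : Tendsto (fun j => ‖S₂ ^ j * C₂ - S₁⁻¹ * (S₂ ^ (j + 1) * C₂)‖ *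
          ‖(S₁⁻¹) ^ (j + 1)‖) atTop (nhds 0) := by
        apply squeeze_zero (fun j => mul_nonneg (norm_nonneg _) (norm_nonneg _))
          (g := fun j => (‖S₂ ^ j‖ * ‖(S₁⁻¹) ^ j‖) * (‖C₂‖ * ‖S₁⁻¹‖) +
            (‖S₂ ^ (j + 1)‖ * ‖(S₁⁻¹) ^ (j + 1)‖) * (‖S₁⁻¹‖ * ‖C₂‖))
        · intro j
          have hF : ‖S₂ ^ j * C₂ - S₁⁻¹ * (S₂ ^ (j + 1) * C₂)‖ ≤
              ‖S₂ ^ j‖ * ‖C₂‖ + ‖S₁⁻¹‖ * (‖S₂ ^ (j + 1)‖ * ‖C₂‖) :=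
            (norm_sub_le _ _).trans (add_le_add (norm_mul_le _ _) (nm3 _ _ _))
          have hp : ‖(S₁⁻¹) ^ (j + 1)‖ ≤ ‖(S₁⁻¹) ^ j‖ * ‖S₁⁻¹‖ := by
            rw [pow_succ]; exact norm_mul_le _ _
          calc ‖S₂ ^ j * C₂ - S₁⁻¹ * (S₂ ^ (j + 1) * C₂)‖ * ‖(S₁⁻¹) ^ (j + 1)‖
              ≤ (‖S₂ ^ j‖ * ‖C₂‖ + ‖S₁⁻¹‖ * (‖S₂ ^ (j + 1)‖ * ‖C₂‖)) * ‖(S₁⁻¹) ^ (j + 1)‖ :=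
                mul_le_mul_of_nonneg_right hF (norm_nonneg _)
            _ = ‖S₂ ^ j‖ * ‖C₂‖ * ‖(S₁⁻¹) ^ (j + 1)‖ +
                (‖S₂ ^ (j + 1)‖ * ‖(S₁⁻¹) ^ (j + 1)‖) * (‖S₁⁻¹‖ * ‖C₂‖) := by ring
            _ ≤ ‖S₂ ^ j‖ * ‖C₂‖ * (‖(S₁⁻¹) ^ j‖ * ‖S₁⁻¹‖) +
                (‖S₂ ^ (j + 1)‖ * ‖(S₁⁻¹) ^ (j + 1)‖) * (‖S₁⁻¹‖ * ‖C₂‖) := by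
                  gcongr
            _ = (‖S₂ ^ j‖ * ‖(S₁⁻¹) ^ j‖) * (‖C₂‖ * ‖S₁⁻¹‖) +
                (‖S₂ ^ (j + 1)‖ * ‖(S₁⁻¹) ^ (j + 1)‖) * (‖S₁⁻¹‖ * ‖C₂‖) := by ring
        · have h1 := hnorm.mul_const (‖C₂‖ * ‖S₁⁻¹‖)
          have h2 := (hnorm.comp (tendsto_add_atTop_nat 1)).mul_const (‖S₁⁻¹‖ * ‖C₂‖)
          simpa using h1.add h2
      have hb : Tendsto (fun j => ‖(A (j + 1))⁻¹‖ * ‖C₁⁻¹‖) atTop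
          (nhds (‖(1 : Matrix (Fin N) (Fin N) ℂ)‖ * ‖C₁⁻¹‖)) :=
        (hAinv.norm).mul_const _
      have h := ha.mul hb
      rw [zero_mul] at h
      exact h
  -- key identity
  have hid : ∀ j : ℕ, IsUnit (A (j + 1)) →
      Kt j * (Kt (j + 1))⁻¹ = S₁⁻¹ + R j := by
    intro j hu
    have hdA : IsUnit (A (j + 1)).det := (Matrix.isUnit_iff_isUnit_det _).mp hu
    have hAc : ∀ X : Matrix (Fin N) (Fin N) ℂ,
        A (j + 1) * ((A (j + 1))⁻¹ * X) = X := fun X => by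
      rw [← mul_assoc, Matrix.mul_nonsing_inv _ hdA, one_mul]
    have hsplit : A j = A (j + 1) +
        (C₁⁻¹ * ((S₁⁻¹) ^ j * (S₂ ^ j * C₂)) -
          C₁⁻¹ * ((S₁⁻¹) ^ (j + 1) * (S₂ ^ (j + 1) * C₂))) := by
      rw [hAdef]; simp only; abel
    rw [hKtA j, hKtA (j + 1), Matrix.mul_inv_rev, Matrix.mul_inv_rev,
      Matrix.inv_eq_left_inv (hpow' (j + 1)), hsplit, mul_add, add_mul]
    congr 1
    · -- main term
      rw [mul_assoc (S₁ ^ j * C₁) (A (j + 1)), hAc,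
        mul_assoc (S₁ ^ j) C₁, hCc, pow_succ, ← mul_assoc, hpow j, one_mul]
    · -- remainder term
      rw [hRdef]
      simp only
      congr 1
      rw [mul_sub, mul_assoc (S₁ ^ j) C₁, hCc, hSc j,
        mul_assoc (S₁ ^ j) C₁, hCc, pow_succ, mul_assoc ((S₁⁻¹) ^ j), hSc j]
  -- limit of Kt j * (Kt (j+1))⁻¹
  have hT : Tendsto (fun j => Kt j * (Kt (j + 1))⁻¹) atTop (nhds S₁⁻¹) := by
    have h0 : Tendsto (fun j => S₁⁻¹ + R j) atTop (nhds (S₁⁻¹ + 0)) :=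
      tendsto_const_nhds.add hRt
    rw [add_zero] at h0
    exact h0.congr' (hevA'.mono fun j hj => (hid j hj).symm)
  -- conclude
  have hXeq : (fun j : ℕ => (K (j + 1))⁻¹ * K j) =
      fun j : ℕ => (Kt j * (Kt (j + 1))⁻¹)ᵀ := by
    funext j
    rw [hK, hK, ← Matrix.transpose_nonsing_inv, ← Matrix.transpose_mul]
  rw [hXeq, ← Matrix.transpose_nonsing_inv]
  exact (continuous_id.matrix_transpose.tendsto S₁⁻¹).comp hT
end

section
/- Consider the 4×4 row-stochastic matrix P with rows [p_s, 1-p_s, 0, 0], [0, p_b, 1-p_b, 0], [0, 0, q, 1-q], [0, 0, 0, 1], where p_s, p_b, q ∈ [0,1]. Let u = (1,0,0,0) and S_z = (s₁, s₂, s₃, 0)ᵀ. If s₂ = ((p_b - p_s)/(1 - p_s))·s₁ and s₃ = 0 with p_s < 1, then u·Pⁿ·S_z = p_bⁿ·s₁ for all n ≥ 0. -/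
open Matrix

/-- for the four-state transition matrix `P` of Definition 1,
initial distribution concentrated on state 1, and Markov states
`S = (s₁, Γ s₁, 0, 0)` with `Γ = (p_b - p_s)/(1 - p_s)`, the expected path is
the AR(1) path with persistence `p_b`: `u Pⁿ S = p_bⁿ s₁` for all `n`. -/
theorem stmt11 (ps pb q : ℝ) (s₁ s₂ s₃ : ℝ)
    (hps : 0 ≤ ps ∧ ps ≤ 1) (hpb : 0 ≤ pb ∧ pb ≤ 1) (hq : 0 ≤ q ∧ q ≤ 1)
    (hps1 : ps < 1)
    (hs₂ : s₂ = ((pb - ps) / (1 - ps)) * s₁) (hs₃ : s₃ = 0)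
    (P : Matrix (Fin 4) (Fin 4) ℝ)
    (hP : P = !![ps, 1 - ps, 0, 0;
                 0, pb, 1 - pb, 0;
                 0, 0, q, 1 - q;
                 0, 0, 0, 1]) :
    ∀ n : ℕ, ((P ^ n).mulVec ![s₁, s₂, s₃, 0]) 0 = pb ^ n * s₁ := by
  have hne : (1 : ℝ) - ps ≠ 0 := by linarith
  have hv : P.mulVec ![s₁, s₂, s₃, 0] = pb • ![s₁, s₂, s₃, 0] := by
    subst hP hs₂ hs₃
    funext i
    fin_cases i <;>
      simp [mulVec, dotProduct, Fin.sum_univ_four] <;> field_simp <;> ring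
  intro n
  induction n with
  | zero => simp
  | succ n ih =>
    rw [pow_succ, ← Matrix.mulVec_mulVec, hv, Matrix.mulVec_smul]
    simp [ih, pow_succ]
    ring
end
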